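/- arXiv:1207.3208 — 6 statements merged into one kernel-verified Lean document; each statement's English description precedes it below -/
import Mathlib

section
/- For deflations f and g on a cpo α, f ⊑ g (in the pointwise order) if and only if the image of f is contained in the image of g. -/
section Deflation

variable {α : Type*} {f g : α → α}

theorem mem_range_iff_apply_eq_self_of_idempotent (hg_idem : ∀ x, g (g x) = g x) {y : α} :
    y ∈ Set.range g ↔ g y = y :=
  ⟨fun ⟨x, hx⟩ => hx ▸ hg_idem x, fun hy => ⟨y, hy⟩⟩

theorem le_of_range_subset_of_monotone_idempotent [Preorder α] (hg_mono : Monotone g)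
    (hg_idem : ∀ x, g (g x) = g x) (hf_le : ∀ x, f x ≤ x) (h : Set.range f ⊆ Set.range g)
    (x : α) : f x ≤ g x := by
  have hfix : g (f x) = f x :=
    (mem_range_iff_apply_eq_self_of_idempotent hg_idem).1 (h ⟨x, rfl⟩)
  calc f x = g (f x) := hfix.symm
    _ ≤ g x := hg_mono (hf_le x)

theorem range_subset_of_le_of_deflation [PartialOrder α] (hf_idem : ∀ x, f (f x) = f x)
    (hg_le : ∀ x, g x ≤ x) (h : ∀ x, f x ≤ g x) : Set.range f ⊆ Set.range g := by
  rintro _ ⟨x, rfl⟩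
  refine ⟨f x, le_antisymm (hg_le (f x)) ?_⟩
  calc f x = f (f x) := (hf_idem x).symm
    _ ≤ g (f x) := h (f x)

end Deflation

theorem deflation_le_iff_range_subset_general {α : Type*} [OmegaCompletePartialOrder α]
    (f g : α → α)
    (hg : OmegaCompletePartialOrder.ωScottContinuous g)
    (hf_idem : ∀ x, f (f x) = f x) (hf_le : ∀ x, f x ≤ x)
    (hg_idem : ∀ x, g (g x) = g x) (hg_le : ∀ x, g x ≤ x) :
    (∀ x, f x ≤ g x) ↔ Set.range f ⊆ Set.range g :=
  ⟨range_subset_of_le_of_deflation hf_idem hg_le,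
    le_of_range_subset_of_monotone_idempotent hg.monotone hg_idem hf_le⟩

/-- For deflations `f` and `g` on a cpo, `f ⊑ g` pointwise iff the image of `f`
is contained in the image of `g`. -/
theorem deflation_le_iff_range_subset {α : Type*} [OmegaCompletePartialOrder α]
    (f g : α → α)
    (hf : OmegaCompletePartialOrder.ωScottContinuous f)
    (hg : OmegaCompletePartialOrder.ωScottContinuous g)
    (hf_idem : ∀ x, f (f x) = f x) (hf_le : ∀ x, f x ≤ x)
    (hg_idem : ∀ x, g (g x) = g x) (hg_le : ∀ x, g x ≤ x) :
    (∀ x, f x ≤ g x) ↔ Set.range f ⊆ Set.range g :=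
  deflation_le_iff_range_subset_general f g hg hf_idem hf_le hg_idem hg_le
end

section
/- If emb_α, proj_α form an ep-pair from α into a universal domain U, and similarly for β and γ, define coerce_{α,β} = proj_β ∘ emb_α. Then if REP α ⊑ REP β or REP γ ⊑ REP β (where REP α = emb_α ∘ proj_α), we have coerce_{β,γ} ∘ coerce_{α,β} = coerce_{α,γ}. -/
open OmegaCompletePartialOrder

/-! A deflation `d ≤ id` of `U` that lies above `REP α` fixes the image of `emb α`; one that lies
above `REP γ` is invisible to `proj γ`. With `d = REP β` these give the two cases of the theorem. -/

section Deflation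

variable {U α : Type*} {d : U → U} (e : α → U) (p : U → α)

theorem isFixedPt_emb_of_rep_le [PartialOrder U] (hd : ∀ u, d u ≤ u) (hpe : ∀ x, p (e x) = x)
    (hrep : ∀ u, e (p u) ≤ d u) (x : α) : Function.IsFixedPt d (e x) :=
  le_antisymm (hd _) (by simpa only [hpe] using hrep (e x))

theorem proj_deflation_eq_of_rep_le [Preorder U] [PartialOrder α] (hp : Monotone p)
    (hd : ∀ u, d u ≤ u) (hpe : ∀ x, p (e x) = x) (hrep : ∀ u, e (p u) ≤ d u) (u : U) :
    p (d u) = p u :=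
  le_antisymm (hp (hd u)) (by simpa only [hpe] using hp (hrep u))

end Deflation

theorem coerce_coerce_general {U α β γ : Type*}
    [OmegaCompletePartialOrder U]
    [OmegaCompletePartialOrder γ]
    (embα : α → U) (projα : U → α) (embβ : β → U) (projβ : U → β)
    (embγ : γ → U) (projγ : U → γ)
    (hprojγ : ωScottContinuous projγ)
    (hα₁ : ∀ x, projα (embα x) = x)
    (hβ₂ : ∀ u, embβ (projβ u) ≤ u)
    (hγ₁ : ∀ x, projγ (embγ x) = x)
    (hrep : (∀ u, embα (projα u) ≤ embβ (projβ u)) ∨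
            (∀ u, embγ (projγ u) ≤ embβ (projβ u))) :
    ∀ x : α, projγ (embβ (projβ (embα x))) = projγ (embα x) := by
  intro x
  rcases hrep with hαβ | hγβ
  · rw [(isFixedPt_emb_of_rep_le (d := fun u => embβ (projβ u)) embα projα hβ₂ hα₁ hαβ x).eq]
  · exact proj_deflation_eq_of_rep_le embγ projγ hprojγ.monotone hβ₂ hγ₁ hγβ (embα x)

/-- If `REP α ⊑ REP β` or `REP γ ⊑ REP β`, then coercing from `α` to `β` and
then to `γ` is the same as coercing directly from `α` to `γ`. -/
theorem coerce_coerce {U α β γ : Type*}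
    [OmegaCompletePartialOrder U] [OrderBot U]
    [OmegaCompletePartialOrder α] [OrderBot α]
    [OmegaCompletePartialOrder β] [OrderBot β]
    [OmegaCompletePartialOrder γ] [OrderBot γ]
    (embα : α → U) (projα : U → α) (embβ : β → U) (projβ : U → β)
    (embγ : γ → U) (projγ : U → γ)
    (hembα : ωScottContinuous embα)
    (hprojα : ωScottContinuous projα)
    (hembβ : ωScottContinuous embβ)
    (hprojβ : ωScottContinuous projβ)
    (hembγ : ωScottContinuous embγ)
    (hprojγ : ωScottContinuous projγ)
    (hα₁ : ∀ x, projα (embα x) = x) (hα₂ : ∀ u, embα (projα u) ≤ u)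
    (hβ₁ : ∀ x, projβ (embβ x) = x) (hβ₂ : ∀ u, embβ (projβ u) ≤ u)
    (hγ₁ : ∀ x, projγ (embγ x) = x) (hγ₂ : ∀ u, embγ (projγ u) ≤ u)
    (hrep : (∀ u, embα (projα u) ≤ embβ (projβ u)) ∨
            (∀ u, embγ (projγ u) ≤ embβ (projβ u))) :
    ∀ x : α, projγ (embβ (projβ (embα x))) = projγ (embα x) :=
  coerce_coerce_general embα projα embβ projβ embγ projγ hprojγ hα₁ hβ₂ hγ₁ hrep
end

section
/- For any lawful functor τ (fmap satisfies fmap id = id and fmap (f ∘ g) = fmap f ∘ fmap g on pointed cpos), if f : α → β is strict (f ⊥ = ⊥), then fmap f is strict: fmap f ⊥ = ⊥. -/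
open OmegaCompletePartialOrder

theorem fmap_strict_general {α β TA TB : Type*}
    [OmegaCompletePartialOrder α] [OrderBot α]
    [OmegaCompletePartialOrder β] [OrderBot β]
    [OmegaCompletePartialOrder TA] [OrderBot TA]
    [OmegaCompletePartialOrder TB] [OrderBot TB]
    (fmapAB : (α → β) → TA → TB) (fmapBA : (β → α) → TB → TA)
    (fmapBB : (β → β) → TB → TB)
    (hcontAB : ∀ f, OmegaCompletePartialOrder.ωScottContinuous (fmapAB f))
    (hmonoBB : ∀ h₁ h₂ : β → β, (∀ x, h₁ x ≤ h₂ x) → ∀ t, fmapBB h₁ t ≤ fmapBB h₂ t)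
    (hid : ∀ t, fmapBB id t = t)
    (hcomp : ∀ (f : α → β) (g : β → α) (t : TB),
        fmapBB (f ∘ g) t = fmapAB f (fmapBA g t))
    (f : α → β) (hf : f ⊥ = ⊥) :
    fmapAB f ⊥ = ⊥ := by
  refine le_antisymm ?_ bot_le
  calc fmapAB f ⊥ ≤ fmapAB f (fmapBA (fun _ => ⊥) ⊥) := (hcontAB f).monotone bot_le
    _ = fmapBB (f ∘ fun _ => ⊥) ⊥ := (hcomp _ _ _).symm
    _ ≤ fmapBB id ⊥ := hmonoBB _ _ (fun _ => hf.trans_le bot_le) _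
    _ = ⊥ := hid _

/-- For any lawful functor on pointed cpos, `fmap` of a strict function is strict. -/
theorem fmap_strict {α β TA TB : Type*}
    [OmegaCompletePartialOrder α] [OrderBot α]
    [OmegaCompletePartialOrder β] [OrderBot β]
    [OmegaCompletePartialOrder TA] [OrderBot TA]
    [OmegaCompletePartialOrder TB] [OrderBot TB]
    (fmapAB : (α → β) → TA → TB) (fmapBA : (β → α) → TB → TA)
    (fmapBB : (β → β) → TB → TB)
    (hcontAB : ∀ f, OmegaCompletePartialOrder.ωScottContinuous (fmapAB f))
    (hcontBA : ∀ g, OmegaCompletePartialOrder.ωScottContinuous (fmapBA g))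
    (hmonoBB : ∀ h₁ h₂ : β → β, (∀ x, h₁ x ≤ h₂ x) → ∀ t, fmapBB h₁ t ≤ fmapBB h₂ t)
    (hid : ∀ t, fmapBB id t = t)
    (hcomp : ∀ (f : α → β) (g : β → α) (t : TB),
        fmapBB (f ∘ g) t = fmapAB f (fmapBA g t))
    (f : α → β) (hf : f ⊥ = ⊥) :
    fmapAB f ⊥ = ⊥ :=
  fmap_strict_general fmapAB fmapBA fmapBB hcontAB hmonoBB hid hcomp f hf
end

section
/- The error monad transformer satisfies the right unit law universally if and only if the inner monad's return is strict: (∀ m, bindET m unitET = m) ↔ (returnτ ⊥ = ⊥), where unitET a = returnτ (Ok a). -/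
open OmegaCompletePartialOrder

universe u

/-- The error type `Error ε α` as a flat domain with bottom, `Err`, and `Ok`. -/
inductive ErrorV (ε α : Type u) : Type u
  | bot : ErrorV ε α
  | err : ε → ErrorV ε α
  | ok : α → ErrorV ε α

/-- Flat order on `ErrorV`. -/
instance {ε α : Type u} : PartialOrder (ErrorV ε α) where
  le x y := x = ErrorV.bot ∨ x = y
  le_refl _ := Or.inr rfl
  le_trans x y z h1 h2 := by rcases h1 with h | h <;> rcases h2 with h' | h' <;> simp_all
  le_antisymm x y h1 h2 := by rcases h1 with h | h <;> rcases h2 with h' | h' <;> simp_all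

instance {ε α : Type u} : OrderBot (ErrorV ε α) where
  bot := ErrorV.bot
  bot_le _ := Or.inl rfl

/-- The strict case analysis `R(k)` used in the definition of `bindET`. -/
def Rfun {T : Type u → Type u}
    [∀ γ, OmegaCompletePartialOrder (T γ)] [∀ γ, OrderBot (T γ)]
    (ret : ∀ {γ : Type u}, γ → T γ)
    {ε α δ : Type u} (k : α → T (ErrorV ε δ)) :
    ErrorV ε α → T (ErrorV ε δ)
  | ErrorV.bot => ⊥
  | ErrorV.err e => ret (ErrorV.err e)
  | ErrorV.ok a => k a

/-- Bind of the error monad transformer: `bindET m k = m >>=τ R(k)`. -/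
def bindET {T : Type u → Type u}
    [∀ γ, OmegaCompletePartialOrder (T γ)] [∀ γ, OrderBot (T γ)]
    (ret : ∀ {γ : Type u}, γ → T γ)
    (bind : ∀ {γ δ : Type u}, T γ → (γ → T δ) → T δ)
    {ε α δ : Type u} (m : T (ErrorV ε α)) (k : α → T (ErrorV ε δ)) :
    T (ErrorV ε δ) :=
  bind m (Rfun ret k)

section

variable {T : Type u → Type u}
    [∀ γ, OmegaCompletePartialOrder (T γ)] [∀ γ, OrderBot (T γ)]
    (ret : ∀ {γ : Type u}, γ → T γ)

theorem Rfun_ret_ok_eq_ret_iff {ε α : Type u} :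
    Rfun ret (fun a : α => ret (ErrorV.ok a)) = (ret : ErrorV ε α → T (ErrorV ε α)) ↔
      ret (⊥ : ErrorV ε α) = ⊥ := by
  refine ⟨fun h => (congrFun h ⊥).symm, fun h => funext ?_⟩
  rintro (_ | e | a)
  · exact h.symm
  · rfl
  · rfl

theorem bindET_ret {ε α δ : Type u} (bind : ∀ {γ δ : Type u}, T γ → (γ → T δ) → T δ)
    (hleft : ∀ {γ δ : Type u} (a : γ) (k : γ → T δ), bind (ret a) k = k a)
    (x : ErrorV ε α) (k : α → T (ErrorV ε δ)) :
    bindET ret bind (ret x) k = Rfun ret k x :=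
  hleft x _

end

theorem bindET_right_unit_iff_return_strict_general {T : Type u → Type u}
    [∀ γ, OmegaCompletePartialOrder (T γ)] [∀ γ, OrderBot (T γ)]
    (ret : ∀ {γ : Type u}, γ → T γ)
    (bind : ∀ {γ δ : Type u}, T γ → (γ → T δ) → T δ)
    (hleft : ∀ {γ δ : Type u} (a : γ) (k : γ → T δ), bind (ret a) k = k a)
    (hright : ∀ {γ : Type u} (m : T γ), bind m ret = m)
    {ε α : Type u} :
    (∀ m : T (ErrorV ε α),
        bindET (fun {_} a => ret a) (fun {_ _} m k => bind m k) m
          (fun a => ret (ErrorV.ok a)) = m)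
      ↔ ret (⊥ : ErrorV ε α) = (⊥ : T (ErrorV ε α)) := by
  constructor
  · intro hunit
    calc ret ⊥ = bindET ret bind (ret ⊥) (fun a : α => ret (ErrorV.ok a)) := (hunit _).symm
      _ = ⊥ := bindET_ret ret bind hleft ⊥ _
  · intro hret m
    rw [bindET, (Rfun_ret_ok_eq_ret_iff ret).mpr hret, hright]

/-- The error monad transformer satisfies the right unit law universally iff the
inner monad's return is strict. -/
theorem bindET_right_unit_iff_return_strict {T : Type u → Type u}
    [∀ γ, OmegaCompletePartialOrder (T γ)] [∀ γ, OrderBot (T γ)]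
    (ret : ∀ {γ : Type u}, γ → T γ)
    (bind : ∀ {γ δ : Type u}, T γ → (γ → T δ) → T δ)
    (hleft : ∀ {γ δ : Type u} (a : γ) (k : γ → T δ), bind (ret a) k = k a)
    (hright : ∀ {γ : Type u} (m : T γ), bind m ret = m)
    (hassoc : ∀ {γ δ φ : Type u} (m : T γ) (h : γ → T δ) (k : δ → T φ),
        bind (bind m h) k = bind m fun x => bind (h x) k)
    (hstrict : ∀ {γ δ : Type u} [PartialOrder γ] [OrderBot γ] (k : γ → T δ),
        k ⊥ = ⊥ → bind (⊥ : T γ) k = ⊥)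
    {ε α : Type u} :
    (∀ m : T (ErrorV ε α),
        bindET (fun {_} a => ret a) (fun {_ _} m k => bind m k) m
          (fun a => ret (ErrorV.ok a)) = m)
      ↔ ret (⊥ : ErrorV ε α) = (⊥ : T (ErrorV ε α)) :=
  bindET_right_unit_iff_return_strict_general ret bind hleft hright
end

section
/- Every value in the inductively defined invariant set Inv of the error monad transformer satisfies the right unit law: if m ∈ Inv then bindET m unitET = m, where Inv is the least set containing unitET a, throwET e, liftET t, ⊥, closed under bindET and catchET with bodies in Inv, and closed under lubs of chains. -/
open OmegaCompletePartialOrder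

universe u

namespace OmegaCompletePartialOrder

/-- `Continuous'` as defined in the older Mathlib (removed since): `f` is monotone and
preserves `ωSup` of chains. -/
def Continuous' {α β : Type*} [OmegaCompletePartialOrder α] [OmegaCompletePartialOrder β]
    (f : α → β) : Prop :=
  ∃ hf : Monotone f, ∀ c : Chain α, (⟨f, hf⟩ : α →o β) (ωSup c) = ωSup (c.map ⟨f, hf⟩)

end OmegaCompletePartialOrder

/-- The inductively defined invariant set for the error monad transformer: it
contains `unitET a`, `throwET e`, `liftET t`, and `⊥`, and is closed under
`bindET` and `catchET` (with bodies in the set) and under lubs of chains. -/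
inductive InvET {T : Type u → Type u}
    [∀ γ, OmegaCompletePartialOrder (T γ)] [∀ γ, OrderBot (T γ)]
    (ret : ∀ {γ : Type u}, γ → T γ)
    (bind : ∀ {γ δ : Type u}, T γ → (γ → T δ) → T δ)
    {ε α : Type u} : T (ErrorV ε α) → Prop
  | unit (a : α) : InvET ret bind (ret (ErrorV.ok a))
  | throw (e : ε) : InvET ret bind (ret (ErrorV.err e))
  | lift (t : T α) : InvET ret bind (bind t fun a => ret (ErrorV.ok a))
  | bind' (m : T (ErrorV ε α)) (k : α → T (ErrorV ε α)) :
      InvET ret bind m → (∀ a, InvET ret bind (k a)) →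
      InvET ret bind (bindET (fun {_} a => ret a) (fun {_ _} m k => bind m k) m k)
  | catch' (m : T (ErrorV ε α)) (h : ε → T (ErrorV ε α)) :
      InvET ret bind m → (∀ e, InvET ret bind (h e)) →
      InvET ret bind (bind m fun x =>
        match x with
        | ErrorV.bot => ⊥
        | ErrorV.err e => h e
        | ErrorV.ok a => ret (ErrorV.ok a))
  | bot : InvET ret bind ⊥
  | sup (c : OmegaCompletePartialOrder.Chain (T (ErrorV ε α))) :
      (∀ n, InvET ret bind (c n)) → InvET ret bind (ωSup c)

/-! `bindET m unitET` is `m >>=τ R(unitET)`, and the strict unit `R(unitET)` agrees with `returnτ`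
except that it sends `⊥` to `⊥`. The values fixed by `· >>=τ R(unitET)` therefore contain every
`returnτ x` with `x ≠ ⊥` (left unit law) and `⊥` (strictness), and are closed under `>>=τ h` whenever
every `h x` is fixed (associativity) and under lubs of chains (continuity). Every generator of `Inv`
is of one of these forms. -/

theorem OmegaCompletePartialOrder.Continuous'.apply_ωSup_eq_of_forall {α : Type*}
    [OmegaCompletePartialOrder α] {f : α → α} (hf : Continuous' f) (c : Chain α)
    (hc : ∀ n, f (c n) = c n) : f (ωSup c) = ωSup c := by
  obtain ⟨_, hsup⟩ := hf
  exact (hsup c).trans (congrArg ωSup (Chain.ext (funext hc)))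

theorem bind_bind_eq_of_forall_bind_eq {T : Type u → Type u}
    {bind : ∀ {γ δ : Type u}, T γ → (γ → T δ) → T δ}
    (hassoc : ∀ {γ δ φ : Type u} (m : T γ) (h : γ → T δ) (k : δ → T φ),
        bind (bind m h) k = bind m fun x => bind (h x) k)
    {γ δ : Type u} (m : T γ) {h : γ → T δ} {k : δ → T δ} (hh : ∀ x, bind (h x) k = h x) :
    bind (bind m h) k = bind m h := by
  rw [hassoc]
  simp only [hh]

theorem bind_Rfun_ok_eq_self_of_strict {T : Type u → Type u}
    [∀ γ, OmegaCompletePartialOrder (T γ)] [∀ γ, OrderBot (T γ)]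
    {ret : ∀ {γ : Type u}, γ → T γ} {bind : ∀ {γ δ : Type u}, T γ → (γ → T δ) → T δ}
    (hstrict : ∀ {γ δ : Type u} [PartialOrder γ] [OrderBot γ] (k : γ → T δ),
        k ⊥ = ⊥ → bind (⊥ : T γ) k = ⊥)
    {ε α β : Type u} {f : ErrorV ε α → T (ErrorV ε β)} (hbot : f ⊥ = ⊥)
    (herr : ∀ e, bind (f (.err e)) (Rfun ret fun b => ret (.ok b)) = f (.err e))
    (hok : ∀ a, bind (f (.ok a)) (Rfun ret fun b => ret (.ok b)) = f (.ok a)) :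
    ∀ x, bind (f x) (Rfun ret fun b => ret (.ok b)) = f x
  | .bot => by
    change bind (f ⊥) _ = f ⊥
    rw [hbot]
    exact hstrict _ rfl
  | .err e => herr e
  | .ok a => hok a

theorem bindET_right_unit_of_invariant_general {T : Type u → Type u}
    [∀ γ, OmegaCompletePartialOrder (T γ)] [∀ γ, OrderBot (T γ)]
    (ret : ∀ {γ : Type u}, γ → T γ)
    (bind : ∀ {γ δ : Type u}, T γ → (γ → T δ) → T δ)
    (hleft : ∀ {γ δ : Type u} (a : γ) (k : γ → T δ), bind (ret a) k = k a)
    (hassoc : ∀ {γ δ φ : Type u} (m : T γ) (h : γ → T δ) (k : δ → T φ),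
        bind (bind m h) k = bind m fun x => bind (h x) k)
    (hstrict : ∀ {γ δ : Type u} [PartialOrder γ] [OrderBot γ] (k : γ → T δ),
        k ⊥ = ⊥ → bind (⊥ : T γ) k = ⊥)
    (hcont : ∀ {γ δ : Type u} (k : γ → T δ),
        OmegaCompletePartialOrder.Continuous' (fun m => bind m k))
    {ε α : Type u} (m : T (ErrorV ε α))
    (hm : InvET ret bind m) :
    bindET (fun {_} a => ret a) (fun {_ _} m k => bind m k) m
      (fun a => ret (ErrorV.ok a)) = m := by
  induction hm with
  | unit a => exact hleft _ _
  | throw e => exact hleft _ _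
  | lift t => exact bind_bind_eq_of_forall_bind_eq hassoc t fun a => hleft _ _
  | bind' m k _ _ _ ihk =>
    exact bind_bind_eq_of_forall_bind_eq hassoc m
      (bind_Rfun_ok_eq_self_of_strict hstrict rfl (fun e => hleft _ _) ihk)
  | catch' m h _ _ _ ihh =>
    exact bind_bind_eq_of_forall_bind_eq hassoc m
      (bind_Rfun_ok_eq_self_of_strict hstrict rfl ihh fun a => hleft _ _)
  | bot => exact hstrict _ rfl
  | sup c _ ih => exact (hcont _).apply_ωSup_eq_of_forall c ih

/-- Every value in the invariant set of the error monad transformer satisfies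
the right unit law. -/
theorem bindET_right_unit_of_invariant {T : Type u → Type u}
    [∀ γ, OmegaCompletePartialOrder (T γ)] [∀ γ, OrderBot (T γ)]
    (ret : ∀ {γ : Type u}, γ → T γ)
    (bind : ∀ {γ δ : Type u}, T γ → (γ → T δ) → T δ)
    (hleft : ∀ {γ δ : Type u} (a : γ) (k : γ → T δ), bind (ret a) k = k a)
    (hright : ∀ {γ : Type u} (m : T γ), bind m ret = m)
    (hassoc : ∀ {γ δ φ : Type u} (m : T γ) (h : γ → T δ) (k : δ → T φ),
        bind (bind m h) k = bind m fun x => bind (h x) k)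
    (hstrict : ∀ {γ δ : Type u} [PartialOrder γ] [OrderBot γ] (k : γ → T δ),
        k ⊥ = ⊥ → bind (⊥ : T γ) k = ⊥)
    (hcont : ∀ {γ δ : Type u} (k : γ → T δ),
        OmegaCompletePartialOrder.Continuous' (fun m => bind m k))
    {ε α : Type u} (m : T (ErrorV ε α))
    (hm : InvET ret bind m) :
    bindET (fun {_} a => ret a) (fun {_ _} m k => bind m k) m
      (fun a => ret (ErrorV.ok a)) = m :=
  bindET_right_unit_of_invariant_general ret bind hleft hassoc hstrict hcont m hm
end

section
/- For the writer monad transformer over a monoid ω and a lawful inner monad τ, every value m satisfying the right unit law (bindWT m unitWT = m) also satisfies the left unit law when used as the codomain of k: if k x satisfies bindWT (k x) unitWT = k x, then bindWT (unitWT x) k = k x. -/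
/-!
By the left unit law of `τ`, both `bindWT (unitWT x) k` and `bindWT (k x) unitWT` reduce to
running `k x` and prepending the log `∅` to its result (on the left, resp. right of `•`);
since `∅` is a two-sided unit these agree, so the hypothesis is the claim.
-/

open OmegaCompletePartialOrder

universe u

/-- The writer type `Writer ω α` as a flat domain with bottom and a strict
`Result` constructor. -/
inductive WriterV (ω α : Type u) : Type u
  | bot : WriterV ω α
  | result : ω → α → WriterV ω α

/-- Bind of the writer monad transformer. -/
def bindWT {T : Type u → Type u}
    [∀ γ, OmegaCompletePartialOrder (T γ)] [∀ γ, OrderBot (T γ)]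
    (ret : ∀ {γ : Type u}, γ → T γ)
    (bind : ∀ {γ δ : Type u}, T γ → (γ → T δ) → T δ)
    {ω : Type u} [Monoid ω] {α δ : Type u}
    (m : T (WriterV ω α)) (k : α → T (WriterV ω δ)) : T (WriterV ω δ) :=
  bind m fun x =>
    match x with
    | WriterV.bot => ⊥
    | WriterV.result w₁ a =>
        bind (k a) fun y =>
          match y with
          | WriterV.bot => ⊥
          | WriterV.result w₂ b => ret (WriterV.result (w₁ * w₂) b)

section

variable {T : Type u → Type u}
    [∀ γ, OmegaCompletePartialOrder (T γ)] [∀ γ, OrderBot (T γ)]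
    (ret : ∀ {γ : Type u}, γ → T γ)
    {ω : Type u} [Monoid ω]

/-- The continuation `Result w' b ↦ returnτ (Result (w • w') b)` through which `bindWT` passes
the output of `k a` when the log so far is `w`. -/
def prependLog {β : Type u} (w : ω) : WriterV ω β → T (WriterV ω β)
  | WriterV.bot => ⊥
  | WriterV.result w' b => ret (WriterV.result (w * w') b)

variable {ret} {bind : ∀ {γ δ : Type u}, T γ → (γ → T δ) → T δ}

theorem bindWT_ret_result
    (hleft : ∀ {γ δ : Type u} (a : γ) (k : γ → T δ), bind (ret a) k = k a)
    {α β : Type u} (w : ω) (a : α) (k : α → T (WriterV ω β)) :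
    bindWT ret bind (ret (WriterV.result w a)) k = bind (k a) (prependLog ret w) := by
  rw [bindWT, hleft]
  rfl

theorem bindWT_unit_right
    (hleft : ∀ {γ δ : Type u} (a : γ) (k : γ → T δ), bind (ret a) k = k a)
    {β : Type u} (m : T (WriterV ω β)) :
    bindWT ret bind m (fun b => ret (WriterV.result (1 : ω) b)) =
      bind m (prependLog ret 1) := by
  rw [bindWT]
  congr 1
  funext y
  cases y with
  | bot => rfl
  | result w b => simp only [hleft, prependLog, mul_one, one_mul]

end

theorem bindWT_left_unit_of_right_unit_general {T : Type u → Type u}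
    [∀ γ, OmegaCompletePartialOrder (T γ)] [∀ γ, OrderBot (T γ)]
    (ret : ∀ {γ : Type u}, γ → T γ)
    (bind : ∀ {γ δ : Type u}, T γ → (γ → T δ) → T δ)
    (hleft : ∀ {γ δ : Type u} (a : γ) (k : γ → T δ), bind (ret a) k = k a)
    {ω : Type u} [Monoid ω] {α β : Type u}
    (x : α) (k : α → T (WriterV ω β))
    (hk : bindWT (fun {_} a => ret a) (fun {_ _} m k => bind m k) (k x)
        (fun b => ret (WriterV.result (1 : ω) b)) = k x) :
    bindWT (fun {_} a => ret a) (fun {_ _} m k => bind m k)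
        (ret (WriterV.result (1 : ω) x)) k = k x := by
  rw [bindWT_ret_result hleft, ← bindWT_unit_right hleft]
  exact hk

/-- For the writer monad transformer, any value `k x` satisfying the right unit
law also satisfies the left unit law: `bindWT (unitWT x) k = k x`, where
`unitWT a = returnτ (Result 1 a)`. -/
theorem bindWT_left_unit_of_right_unit {T : Type u → Type u}
    [∀ γ, OmegaCompletePartialOrder (T γ)] [∀ γ, OrderBot (T γ)]
    (ret : ∀ {γ : Type u}, γ → T γ)
    (bind : ∀ {γ δ : Type u}, T γ → (γ → T δ) → T δ)
    (hleft : ∀ {γ δ : Type u} (a : γ) (k : γ → T δ), bind (ret a) k = k a)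
    (hright : ∀ {γ : Type u} (m : T γ), bind m ret = m)
    (hassoc : ∀ {γ δ φ : Type u} (m : T γ) (h : γ → T δ) (k : δ → T φ),
        bind (bind m h) k = bind m fun x => bind (h x) k)
    {ω : Type u} [Monoid ω] {α β : Type u}
    (x : α) (k : α → T (WriterV ω β))
    (hk : bindWT (fun {_} a => ret a) (fun {_ _} m k => bind m k) (k x)
        (fun b => ret (WriterV.result (1 : ω) b)) = k x) :
    bindWT (fun {_} a => ret a) (fun {_ _} m k => bind m k)
        (ret (WriterV.result (1 : ω) x)) k = k x :=
  bindWT_left_unit_of_right_unit_general ret bind hleft x k hk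
end
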